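/- There exist a finite group G and elements a, b ∈ G such that for every g ∈ G the subgroups ⟨a,g⟩ and ⟨b,g⟩ are T-groups, but there exists g ∈ G such that ⟨ab, g⟩ is not a T-group. Consequently, for the class 𝔉 of finite T-groups, the set of 𝔉-isolated elements of G is not closed under multiplication and hence is not the underlying set of a subgroup of G. -/

import Mathlib

universe u

/-- `X` is a T-group: whenever `H` is normal in `K` and `K` is normal in `X`,
then `H` (viewed as a subgroup of `X`) is normal in `X`. -/
def IsTGroup (X : Type u) [Group X] : Prop :=
  ∀ (K : Subgroup X) (H : Subgroup ↥K), K.Normal → H.Normal →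
    (H.map K.subtype).Normal

/-!
Take `G = (C₅ × C₅) ⋊ C₄` with `P = ⟨a, b⟩ ≅ 𝔽₅²`, where `c` acts with the two distinct
eigenvalues `3, 2` on the eigenvectors `a, b`; the cyclic subgroup generated by an element
outside `P` then meets `P` trivially. For `e ∈ {a, b}` and `g ∈ P` the group `⟨e, g⟩` is abelian; for `g ∉ P` it is
`⟨e⟩ ⋊ ⟨g⟩`, in which `⟨e⟩` is normal of prime order, self-centralizing and contains the derived
subgroup. A subgroup `H ⊴ K ⊴ N` of such a group `N` either meets `⟨e⟩` trivially, and then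
commutes with it and is trivial, or contains `⟨e⟩ ⊇ N'` and is normal. On the other hand
`⟨ab⟩ ⊴ P ∩ ⟨ab, c⟩ ⊴ ⟨ab, c⟩`, but `c` does not normalize `⟨ab⟩` since `ab` is not an eigenvector.
So `a` and `b` are `T`-isolated while `ab` is not.
-/

open Subgroup

section TGroup

variable {Γ : Type*} [Group Γ]

theorem map_subtype_subgroupOf (K : Subgroup Γ) (L : Subgroup K) :
    (L.map K.subtype).subgroupOf K = L := by
  rw [← comap_subtype, comap_map_eq_self_of_injective K.subtype_injective]

theorem isTGroup_subgroup_iff (N : Subgroup Γ) :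
    IsTGroup N ↔ ∀ H K : Subgroup Γ, H ≤ K → K ≤ N → N ≤ normalizer K → K ≤ normalizer H →
      N ≤ normalizer H := by
  constructor
  · intro hT H K hHK hKN hNK hKH
    have hHK' : H.subgroupOf N ≤ K.subgroupOf N := subgroupOf_mono N hHK
    have hK : (K.subgroupOf N).Normal := (normal_subgroupOf_iff_le_normalizer hKN).mpr hNK
    have hH : ((H.subgroupOf N).subgroupOf (K.subgroupOf N)).Normal := by
      rw [normal_subgroupOf_iff_le_normalizer hHK', ← subgroupOf_normalizer_eq (hHK.trans hKN)]
      exact subgroupOf_mono N hKH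
    have := hT _ _ hK hH
    rw [map_subgroupOf_eq_of_le hHK'] at this
    exact (normal_subgroupOf_iff_le_normalizer (hHK.trans hKN)).mp this
  · intro h K H hK hH
    have hHK : H.map K.subtype ≤ K := map_subtype_le H
    rw [← map_subtype_subgroupOf N (H.map K.subtype),
      normal_subgroupOf_iff_le_normalizer (map_subtype_le _)]
    refine h _ _ (map_mono hHK) (map_subtype_le K) ?_ ?_
    · rwa [← normal_subgroupOf_iff_le_normalizer (map_subtype_le K), map_subtype_subgroupOf]
    · rw [← map_subtype_subgroupOf K H, normal_subgroupOf_iff_le_normalizer hHK] at hH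
      exact (map_mono hH).trans (le_normalizer_map _)

theorem isTGroup_of_le_centralizer {N : Subgroup Γ} (hN : N ≤ centralizer N) : IsTGroup N := by
  rw [isTGroup_subgroup_iff]
  intro H K hHK hKN _ _
  exact hN.trans ((centralizer_le (hHK.trans hKN)).trans (centralizer_le_normalizer _))

theorem not_isTGroup_of_not_le_normalizer {N P H : Subgroup Γ} [P.Normal]
    (hP : P ≤ centralizer P) (hH : H ≤ N ⊓ P) (hN : ¬ N ≤ normalizer H) : ¬ IsTGroup N := by
  rw [isTGroup_subgroup_iff]
  intro hT
  refine hN (hT H (N ⊓ P) hH inf_le_left ?_ ?_)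
  · rw [inf_comm, ← normal_subgroupOf_iff_le_normalizer_inf]
    infer_instance
  · exact (inf_le_right.trans hP).trans
      ((centralizer_le (hH.trans inf_le_right)).trans (centralizer_le_normalizer _))

theorem eq_bot_or_eq_of_le_of_prime_card {A B : Subgroup Γ} (hA : (Nat.card A).Prime)
    (hBA : B ≤ A) : B = ⊥ ∨ B = A := by
  have : Finite A := Nat.finite_of_card_ne_zero hA.ne_zero
  rcases (Nat.dvd_prime hA).mp (card_dvd_of_le hBA) with h | h
  · exact Or.inl ((eq_bot_iff_card B).mpr h)
  · exact Or.inr (eq_of_le_of_card_ge hBA h.ge)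

theorem isTGroup_of_prime_card {N A : Subgroup Γ} (hAN : A ≤ N) (hNA : N ≤ normalizer A)
    (hA : (Nat.card A).Prime) (hcent : N ⊓ centralizer A ≤ A) (hcomm : ⁅N, N⁆ ≤ A) :
    IsTGroup N := by
  have eq_bot_of_inf_eq_bot (B : Subgroup Γ) (hBN : B ≤ N) (hAB : A ≤ normalizer B)
      (hBA : B ⊓ A = ⊥) : B = ⊥ := by
    have hBA_comm : ⁅B, A⁆ ≤ B ⊓ A :=
      le_inf (le_normalizer_iff_commutator_le_left.mp hAB)
        (le_normalizer_iff_commutator_le_right.mp (hBN.trans hNA))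
    have hBcent : B ≤ centralizer A := by
      rw [← commutator_eq_bot_iff_le_centralizer, eq_bot_iff, ← hBA]
      exact hBA_comm
    rwa [inf_eq_left.mpr ((le_inf hBN hBcent).trans hcent)] at hBA
  rw [isTGroup_subgroup_iff]
  intro H K hHK hKN hNK hKH
  rcases eq_bot_or_eq_of_le_of_prime_card hA (inf_le_right : H ⊓ A ≤ A) with hHA | hHA
  · have hH : H = ⊥ := by
      rcases eq_bot_or_eq_of_le_of_prime_card hA (inf_le_right : K ⊓ A ≤ A) with hKA | hKA
      · exact le_bot_iff.mp (hHK.trans (eq_bot_of_inf_eq_bot K hKN (hAN.trans hNK) hKA).le)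
      · exact eq_bot_of_inf_eq_bot H (hHK.trans hKN) ((inf_eq_right.mp hKA).trans hKH) hHA
    rw [hH, normalizer_eq_top]
    exact le_top
  · rw [le_normalizer_iff_commutator_le_right]
    exact (commutator_mono le_rfl (hHK.trans hKN)).trans (hcomm.trans (inf_eq_right.mp hHA))

theorem sup_inf_eq_of_disjoint {A Z P : Subgroup Γ} [A.Normal] (hAP : A ≤ P)
    (hZP : Disjoint Z P) : (A ⊔ Z) ⊓ P = A := by
  rw [← SetLike.coe_set_eq, coe_inf, normal_mul, ← mul_inf_assoc _ _ _ hAP, hZP.eq_bot, coe_bot,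
    Set.mul_singleton]
  simp only [mul_one, Set.image_id']

theorem isTGroup_sup_zpowers {P A : Subgroup Γ} [A.Normal] (hΓP : commutator Γ ≤ P)
    (hA : (Nat.card A).Prime) (hAP : A ≤ P) (hcent : centralizer A ≤ P) {g : Γ}
    (hg : Disjoint (zpowers g) P) : IsTGroup ↥(A ⊔ zpowers g) := by
  have hNP : (A ⊔ zpowers g) ⊓ P = A := sup_inf_eq_of_disjoint hAP hg
  refine isTGroup_of_prime_card le_sup_left le_normalizer_of_normal hA ?_ ?_
  · exact (inf_le_inf_left _ hcent).trans hNP.le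
  · exact (le_inf ((commutator_le_sup _ _).trans_eq (sup_idem _))
      ((commutator_mono le_top le_top).trans hΓP)).trans hNP.le

theorem isTGroup_closure_pair {P A : Subgroup Γ} [A.Normal] (hP : P ≤ centralizer P)
    (hΓP : commutator Γ ≤ P) (hfree : ∀ g ∉ P, Disjoint (zpowers g) P)
    (hA : (Nat.card A).Prime) (hAP : A ≤ P) (hcent : centralizer A ≤ P) {e : Γ} (he : e ∈ A)
    (he1 : e ≠ 1) (g : Γ) : IsTGroup ↥(closure {e, g}) := by
  by_cases hg : g ∈ P
  · have hNP : closure {e, g} ≤ P := by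
      rw [closure_le, Set.insert_subset_iff, Set.singleton_subset_iff]
      exact ⟨hAP he, hg⟩
    exact isTGroup_of_le_centralizer (hNP.trans (hP.trans (centralizer_le hNP)))
  · have hzA : zpowers e = A :=
      (eq_bot_or_eq_of_le_of_prime_card hA (zpowers_le.mpr he)).resolve_left
        (zpowers_eq_bot.not.mpr he1)
    rw [Set.insert_eq, Subgroup.closure_union, ← zpowers_eq_closure, ← zpowers_eq_closure, hzA]
    exact isTGroup_sup_zpowers hΓP hA hAP hcent (hfree g hg)

end TGroup

/-- `⟨x, y, k⟩` encodes `a ^ x * b ^ y * c ^ k`; the relations `c⁻¹ a c = a²`, `c⁻¹ b c = b³` say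
that moving `c ^ k` to the right multiplies `x` by `3 ^ k` and `y` by `2 ^ k`. -/
structure G100 where
  x : ZMod 5
  y : ZMod 5
  k : ZMod 4
deriving DecidableEq, Fintype

namespace G100

instance : One G100 := ⟨⟨0, 0, 0⟩⟩
instance : Mul G100 := ⟨fun u v => ⟨u.x + 3 ^ u.k.val * v.x, u.y + 2 ^ u.k.val * v.y, u.k + v.k⟩⟩
instance : Inv G100 := ⟨fun v => ⟨-(3 ^ (-v.k).val * v.x), -(2 ^ (-v.k).val * v.y), -v.k⟩⟩

theorem mul_def (u v : G100) :
    u * v = ⟨u.x + 3 ^ u.k.val * v.x, u.y + 2 ^ u.k.val * v.y, u.k + v.k⟩ := rfl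

theorem inv_def (v : G100) : v⁻¹ = ⟨-(3 ^ (-v.k).val * v.x), -(2 ^ (-v.k).val * v.y), -v.k⟩ :=
  rfl

instance : Group G100 := Group.ofLeftAxioms
  (fun u v w => by
    have pow_val_add (r : ZMod 5) (hr : r ^ 4 = 1) (i j : ZMod 4) :
        r ^ (i + j).val = r ^ i.val * r ^ j.val := by
      rw [ZMod.val_add, ← pow_eq_pow_mod _ hr, pow_add]
    simp only [mul_def, mk.injEq, pow_val_add 3 (by decide), pow_val_add 2 (by decide)]
    refine ⟨?_, ?_, ?_⟩ <;> ring)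
  (by decide)
  (by decide)

def kHom : G100 →* Multiplicative (ZMod 4) where
  toFun v := .ofAdd v.k
  map_one' := rfl
  map_mul' _ _ := rfl

abbrev P : Subgroup G100 := kHom.ker

def a : G100 := ⟨1, 0, 0⟩
def b : G100 := ⟨0, 1, 0⟩
def c : G100 := ⟨0, 0, 1⟩

def line (u v : ZMod 5) : Subgroup G100 where
  carrier := {w | w.k = 0 ∧ u * w.x = v * w.y}
  one_mem' := ⟨rfl, by simp [show (1 : G100) = ⟨0, 0, 0⟩ from rfl]⟩
  mul_mem' := by
    rintro ⟨x, y, k⟩ ⟨x', y', k'⟩ ⟨rfl, h⟩ ⟨rfl, h'⟩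
    refine ⟨by simp [mul_def], ?_⟩
    simp only [mul_def, ZMod.val_zero, pow_zero, one_mul] at *
    linear_combination h + h'
  inv_mem' := by
    rintro ⟨x, y, k⟩ ⟨rfl, h⟩
    refine ⟨by simp [inv_def], ?_⟩
    simp only [inv_def, neg_zero, ZMod.val_zero, pow_zero, one_mul] at *
    linear_combination -h

instance (u v : ZMod 5) : DecidablePred (· ∈ line u v) := fun w =>
  decidable_of_iff (w.k = 0 ∧ u * w.x = v * w.y) Iff.rfl

theorem P_le_centralizer : P ≤ centralizer P := by
  have : ∀ u v : G100, u ∈ P → v ∈ P → u * v = v * u := by decide +kernel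
  exact fun u hu v hv => this v u hv hu

theorem commutator_le_P : commutator G100 ≤ P := Abelianization.commutator_subset_ker kHom

-- `c`, `c²`, `c³` act on `P ≅ 𝔽₅²` without nonzero fixed points.
theorem disjoint_zpowers_P {g : G100} (hg : g ∉ P) : Disjoint (zpowers g) P := by
  have pow_four : ∀ g : G100, g ∉ P → g ^ 4 = 1 := by decide
  have pow_mem : ∀ g : G100, g ∉ P → ∀ n < 4, g ^ n ∈ P → g ^ n = 1 := by decide
  rw [disjoint_iff_inf_le]
  intro x hx
  obtain ⟨hxg, hxP⟩ := mem_inf.mp hx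
  obtain ⟨n, rfl⟩ := Submonoid.mem_powers_iff _ _ |>.mp (mem_powers_iff_mem_zpowers.mpr hxg)
  rw [pow_eq_pow_mod n (pow_four g hg)] at hxP ⊢
  exact mem_bot.mpr (pow_mem g hg _ (Nat.mod_lt _ (by norm_num)) hxP)

theorem centralizer_le_P {e : G100} (he : e ∈ P) (he1 : e ≠ 1) : centralizer {e} ≤ P := by
  have : ∀ e w : G100, e ∈ P → e ≠ 1 → e * w = w * e → w ∈ P := by decide +kernel
  exact fun w hw => this e w he he1 (mem_centralizer_iff.mp hw e rfl)

instance : (line 0 1).Normal := ⟨by decide +kernel⟩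
instance : (line 1 0).Normal := ⟨by decide +kernel⟩

theorem line_le_P (u v : ZMod 5) : line u v ≤ P :=
  fun _ hw => MonoidHom.mem_ker.mpr (congrArg Multiplicative.ofAdd hw.1)

theorem card_line (u v : ZMod 5) (huv : (u, v) ≠ 0) : Nat.card (line u v) = 5 := by
  rw [Nat.card_eq_fintype_card]
  revert u v
  decide

theorem isTGroup_closure_of_mem_line {u v : ZMod 5} [(line u v).Normal] (huv : (u, v) ≠ 0)
    {e : G100} (he : e ∈ line u v) (he1 : e ≠ 1) (g : G100) : IsTGroup ↥(closure {e, g}) :=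
  isTGroup_closure_pair P_le_centralizer commutator_le_P (fun _ => disjoint_zpowers_P)
    (card_line u v huv ▸ Nat.prime_five) (line_le_P u v)
    ((centralizer_le (Set.singleton_subset_iff.mpr he)).trans
      (centralizer_le_P (line_le_P u v he) he1)) he he1 g

theorem isTGroup_closure_a (g : G100) : IsTGroup ↥(closure {a, g}) :=
  isTGroup_closure_of_mem_line (u := 0) (v := 1) (by decide) (by decide) (by decide) g

theorem isTGroup_closure_b (g : G100) : IsTGroup ↥(closure {b, g}) :=
  isTGroup_closure_of_mem_line (u := 1) (v := 0) (by decide) (by decide) (by decide) g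

theorem not_isTGroup_closure_mul_c : ¬ IsTGroup ↥(closure {a * b, c}) := by
  have hab : a * b ∈ closure {a * b, c} := subset_closure (by simp)
  have hc : c ∈ closure {a * b, c} := subset_closure (by simp)
  refine not_isTGroup_of_not_le_normalizer P_le_centralizer
    (zpowers_le.mpr ⟨hab, show a * b ∈ P by decide⟩) fun h => ?_
  have hconj : c * (a * b) * c⁻¹ ∈ zpowers (a * b) :=
    (mem_normalizer_iff.mp (h hc) _).mp (mem_zpowers _)
  exact (by decide : c * (a * b) * c⁻¹ ∉ line 1 1)
    (zpowers_le.mpr (by decide : a * b ∈ line 1 1) hconj)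

end G100

theorem tgroup_isolated_not_closed_under_mul :
    ∃ (G : Type) (instG : Group G),
      letI := instG
      Finite G ∧
      ∃ a b : G,
        (∀ g : G, IsTGroup ↥(Subgroup.closure {a, g})) ∧
        (∀ g : G, IsTGroup ↥(Subgroup.closure {b, g})) ∧
        (∃ g : G, ¬ IsTGroup ↥(Subgroup.closure {a * b, g})) ∧
        ¬ ∃ H : Subgroup G,
            (H : Set G) = {x : G | ∀ y : G, IsTGroup ↥(Subgroup.closure {x, y})} := by
  refine ⟨G100, inferInstance, inferInstance, G100.a, G100.b, G100.isTGroup_closure_a,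
    G100.isTGroup_closure_b, ⟨G100.c, G100.not_isTGroup_closure_mul_c⟩, ?_⟩
  rintro ⟨H, hH⟩
  have mem_H (x : G100) : x ∈ H ↔ ∀ y, IsTGroup ↥(closure {x, y}) := by
    rw [← SetLike.mem_coe, hH]
    rfl
  have hab : G100.a * G100.b ∈ H :=
    mul_mem ((mem_H _).mpr G100.isTGroup_closure_a) ((mem_H _).mpr G100.isTGroup_closure_b)
  exact G100.not_isTGroup_closure_mul_c ((mem_H _).mp hab G100.c)
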